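/- For the score function ψ_j(y,z,θ,ηʲ) = (eʲ − μʲ)ᵀ{z(y − z_jθ − z_{-j}ᵀβ_{-j}) + Γ(θeʲ + β_{-j})} with nuisance parameter ηʲ = (β_{-j}, μʲ), if μ₀ʲ solves J_{j,-j} − (μ₀ʲ)ᵀJ_{-j,-j} = 0 where J = E[zzᵀ] − Γ = E[xxᵀ], then at η₀ʲ = (β₀,₋ⱼ, μ₀ʲ) the orthogonality condition holds: the derivative of ηʲ ↦ E[ψ_j(y, z, β₀ⱼ, ηʲ)] with respect to ηʲ, evaluated at η₀ʲ, is zero (both the gradient in β_{-j} and the gradient in μʲ vanish). -/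

import Mathlib

open MeasureTheory ProbabilityTheory Finset Filter

noncomputable section

namespace EIV

/-- ℓ₂ norm of a finite vector. -/
def l2 {m : ℕ} (v : Fin m → ℝ) : ℝ := Real.sqrt (∑ k, v k ^ 2)

/-- ℓ₁ norm of a finite vector. -/
def l1 {m : ℕ} (v : Fin m → ℝ) : ℝ := ∑ k, |v k|

/-- ℓ₀ "norm" (number of nonzero coordinates). -/
def l0 {m : ℕ} (v : Fin m → ℝ) : ℕ := (Function.support v).ncard

/-- A real random variable is subgaussian with variance parameter `γ2`. -/
def SubG {Ω : Type} [MeasurableSpace Ω] (μ : Measure Ω) (f : Ω → ℝ) (γ2 : ℝ) : Prop :=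
  ∀ t : ℝ, ∫ ω, Real.exp (t * f ω) ∂μ ≤ Real.exp (γ2 * t ^ 2 / 2)

/-- A random vector is subgaussian with variance parameter `γ2`. -/
def SubGVec {Ω : Type} [MeasurableSpace Ω] {p : ℕ} (μ : Measure Ω)
    (f : Ω → Fin p → ℝ) (γ2 : ℝ) : Prop :=
  ∀ v : Fin p → ℝ, (∑ k, v k ^ 2) = 1 → SubG μ (fun ω => ∑ k, v k * f ω k) γ2

/-- Response variable `y = xᵀβ₀ + ξ`. -/
def yval {Ω : Type} {p : ℕ} (x : Ω → Fin p → ℝ) (ξ : Ω → ℝ) (β₀ : Fin p → ℝ) (ω : Ω) : ℝ :=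
  (∑ j, x ω j * β₀ j) + ξ ω

/-- Observed covariates `z = x + w`. -/
def zval {Ω : Type} {p : ℕ} (x w : Ω → Fin p → ℝ) (ω : Ω) (j : Fin p) : ℝ := x ω j + w ω j

/-- Diagonal of the covariance matrix `Γ = cov(w)` (which is assumed diagonal). -/
def Γv {Ω : Type} [MeasurableSpace Ω] {p : ℕ} (μ : Measure Ω) (w : Ω → Fin p → ℝ)
    (j : Fin p) : ℝ := ∫ ω, (w ω j) ^ 2 ∂μ

/-- The orthogonal score function
`ψ_j(y,z,θ,ηʲ) = (eʲ−μʲ)ᵀ{z(y − z_jθ − z_{-j}ᵀβ_{-j}) + Γ(θeʲ + β_{-j})}`,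
where `Γ` is diagonal (represented by the vector of its diagonal entries). -/
def score {p : ℕ} (Γ : Fin p → ℝ) (j : Fin p) (yy : ℝ) (zz : Fin p → ℝ)
    (θ : ℝ) (β μv : Fin p → ℝ) : ℝ :=
  ∑ k, ((if k = j then (1 : ℝ) else 0) - μv k) *
    (zz k * (yy - zz j * θ - ∑ l ∈ Finset.univ.erase j, zz l * β l)
      + Γ k * (if k = j then θ else β k))

/-- `Σ_j = E[(z_j − z_{-j}ᵀμ₀ʲ)z_j] − Γ_{jj}`. -/
def Sigpop {Ω : Type} [MeasurableSpace Ω] {p : ℕ} (μ : Measure Ω)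
    (x w : Ω → Fin p → ℝ) (μ₀ : Fin p → Fin p → ℝ) (j : Fin p) : ℝ :=
  (∫ ω, (zval x w ω j - ∑ k ∈ Finset.univ.erase j, zval x w ω k * μ₀ j k) * zval x w ω j ∂μ)
    - Γv μ w j

/-- `σ_j = Σ_j⁻¹ (E[ψ_j²(y,z,β₀ⱼ,η₀ʲ)])^{1/2}`. -/
def sigpop {Ω : Type} [MeasurableSpace Ω] {p : ℕ} (μ : Measure Ω)
    (x w : Ω → Fin p → ℝ) (ξ : Ω → ℝ) (β₀ : Fin p → ℝ) (μ₀ : Fin p → Fin p → ℝ)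
    (j : Fin p) : ℝ :=
  (Sigpop μ x w μ₀ j)⁻¹ *
    Real.sqrt (∫ ω, (score (Γv μ w) j (yval x ξ β₀ ω) (zval x w ω) (β₀ j) β₀ (μ₀ j)) ^ 2 ∂μ)

/-- `ψ̄_j(y,z) = −σ_j⁻¹Σ_j⁻¹ψ_j(y,z,β₀ⱼ,η₀ʲ)`. -/
def ψbar {Ω : Type} [MeasurableSpace Ω] {p : ℕ} (μ : Measure Ω)
    (x w : Ω → Fin p → ℝ) (ξ : Ω → ℝ) (β₀ : Fin p → ℝ) (μ₀ : Fin p → Fin p → ℝ)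
    (j : Fin p) (ω : Ω) : ℝ :=
  -((sigpop μ x w ξ β₀ μ₀ j)⁻¹ * (Sigpop μ x w μ₀ j)⁻¹ *
    score (Γv μ w) j (yval x ξ β₀ ω) (zval x w ω) (β₀ j) β₀ (μ₀ j))

/-- `Σ̂_j = n⁻¹ Σᵢ (z_{ij} − z_{i,-j}ᵀμ̂ʲ) z_{ij} − Γ̂_{jj}`, on the sample `d` of size `n`;
`Γe` is the (possibly estimated) diagonal of `Γ`. -/
def Sighat {Ω : Type} {p n : ℕ} (x w : Ω → Fin p → ℝ)
    (Γe : (Fin n → Ω) → Fin p → ℝ) (μhat : Fin p → (Fin n → Ω) → Fin p → ℝ)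
    (j : Fin p) (d : Fin n → Ω) : ℝ :=
  (n : ℝ)⁻¹ * (∑ i, (zval x w (d i) j
      - ∑ k ∈ Finset.univ.erase j, zval x w (d i) k * μhat j d k) * zval x w (d i) j)
    - Γe d j

/-- The orthogonal-score estimator `β̌_j` (Algorithm 1 when `Γe` is the true `Γ`,
Algorithm 2 when `Γe` is an estimator `Γ̂`). -/
def βcheck {Ω : Type} {p n : ℕ} (x w : Ω → Fin p → ℝ) (ξ : Ω → ℝ) (β₀ : Fin p → ℝ)
    (Γe : (Fin n → Ω) → Fin p → ℝ) (βhat : (Fin n → Ω) → Fin p → ℝ)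
    (μhat : Fin p → (Fin n → Ω) → Fin p → ℝ) (j : Fin p) (d : Fin n → Ω) : ℝ :=
  (Sighat x w Γe μhat j d)⁻¹ *
    ((n : ℝ)⁻¹ * (∑ i, (zval x w (d i) j
          - ∑ k ∈ Finset.univ.erase j, zval x w (d i) k * μhat j d k)
        * (yval x ξ β₀ (d i) - ∑ k ∈ Finset.univ.erase j, zval x w (d i) k * βhat d k))
      - ∑ k ∈ Finset.univ.erase j, μhat j d k * Γe d k * βhat d k)

/-- Plug-in estimator `σ̂_j = Σ̂_j⁻¹ {n⁻¹Σᵢ ψ_j²(y_i,z_i,β̂_j,η̂ʲ)}^{1/2}`. -/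
def sighat {Ω : Type} {p n : ℕ} (x w : Ω → Fin p → ℝ) (ξ : Ω → ℝ) (β₀ : Fin p → ℝ)
    (Γe : (Fin n → Ω) → Fin p → ℝ) (βhat : (Fin n → Ω) → Fin p → ℝ)
    (μhat : Fin p → (Fin n → Ω) → Fin p → ℝ) (j : Fin p) (d : Fin n → Ω) : ℝ :=
  (Sighat x w Γe μhat j d)⁻¹ *
    Real.sqrt ((n : ℝ)⁻¹ * ∑ i, (score (Γe d) j (yval x ξ β₀ (d i)) (zval x w (d i))
        (βhat d j) (βhat d) (μhat j d)) ^ 2)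

/-- Condition A of the paper. -/
def CondA {Ω : Type} [MeasurableSpace Ω] {p : ℕ} (μ : Measure Ω)
    (x w : Ω → Fin p → ℝ) (ξ : Ω → ℝ) (c C : ℝ) : Prop :=
  Measurable x ∧ Measurable w ∧ Measurable ξ ∧
  (∃ σx2, 0 ≤ σx2 ∧ σx2 ≤ C ∧ SubGVec μ x σx2) ∧
  (∀ j, ∫ ω, x ω j ∂μ = 0) ∧
  (∀ v : Fin p → ℝ,
      c * (∑ k, v k ^ 2) ≤ ∑ j, ∑ k, v j * v k * ∫ ω, x ω j * x ω k ∂μ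
      ∧ (∑ j, ∑ k, v j * v k * ∫ ω, x ω j * x ω k ∂μ) ≤ C * (∑ k, v k ^ 2)) ∧
  (∃ σξ2, 0 ≤ σξ2 ∧ σξ2 ≤ C ∧ SubG μ ξ σξ2) ∧ (∫ ω, ξ ω ∂μ = 0) ∧
  IndepFun (fun ω => (x ω, w ω)) ξ μ ∧
  (∃ σw2, 0 ≤ σw2 ∧ σw2 ≤ C ∧ SubGVec μ w σw2) ∧
  (∀ j, ∫ ω, w ω j ∂μ = 0) ∧
  (∀ j k, ∫ ω, x ω j * w ω k ∂μ = 0) ∧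
  (∀ j k, j ≠ k → ∫ ω, w ω j * w ω k ∂μ = 0)

/-- `μ₀ʲ` is the population regression coefficient of `x_j` on `x_{-j}`
(represented as a `p`-vector whose `j`-th entry is zero). -/
def Mu0Spec {Ω : Type} [MeasurableSpace Ω] {p : ℕ} (μ : Measure Ω)
    (x : Ω → Fin p → ℝ) (μ₀ : Fin p → Fin p → ℝ) : Prop :=
  ∀ j, μ₀ j j = 0 ∧ ∀ k, k ≠ j →
    ∫ ω, (x ω j - ∑ l ∈ Finset.univ.erase j, x ω l * μ₀ j l) * x ω k ∂μ = 0

/-- Condition B of the paper: sparsity and rates of the preliminary estimators. -/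
def CondB {Ω : Type} [MeasurableSpace Ω] {p n : ℕ} (μ : Measure Ω)
    [IsProbabilityMeasure μ] (β₀ : Fin p → ℝ) (μ₀ : Fin p → Fin p → ℝ)
    (βhat : (Fin n → Ω) → Fin p → ℝ) (μhat : Fin p → (Fin n → Ω) → Fin p → ℝ)
    (S : Finset (Fin p)) (s : ℕ) (C Δn : ℝ) : Prop :=
  2 ≤ S.card ∧ 1 ≤ s ∧ l0 β₀ ≤ s ∧ (∀ j ∈ S, l0 (μ₀ j) ≤ s) ∧
  ENNReal.ofReal (1 - Δn) ≤
    (Measure.pi fun _ : Fin n => μ) {d |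
      (l1 (fun k => βhat d k - β₀ k) ≤ C * (1 + l2 β₀) * s * Real.sqrt (Real.log p / n)
        ∧ l2 (fun k => βhat d k - β₀ k)
            ≤ C * (1 + l2 β₀) * Real.sqrt s * Real.sqrt (Real.log p / n)
        ∧ (l0 (βhat d) : ℝ) ≤ C * s)
      ∧ ∀ j ∈ S,
        (l1 (fun k => μhat j d k - μ₀ j k)
            ≤ C * (1 + l2 (μ₀ j)) * s * Real.sqrt (Real.log p / n)
          ∧ l2 (fun k => μhat j d k - μ₀ j k)
              ≤ C * (1 + l2 (μ₀ j)) * Real.sqrt s * Real.sqrt (Real.log p / n)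
          ∧ (l0 (μhat j d) : ℝ) ≤ C * s)}

/-- Condition C of the paper: growth restrictions. -/
def CondC {p : ℕ} (n : ℕ) (β₀ : Fin p → ℝ) (μ₀ : Fin p → Fin p → ℝ)
    (S : Finset (Fin p)) (s : ℕ) (C δn : ℝ) : Prop :=
  (∀ j, |β₀ j| ≤ C) ∧
  ∃ m : ℝ, (∀ j ∈ S, l2 (μ₀ j) ≤ m) ∧
    (1 + l2 β₀) * (1 + m) * s * Real.log ((n : ℝ) * p) ≤ δn * Real.sqrt n

/-!
Each nuisance coordinate enters the score affinely, so `t ↦ E[ψ_j]` along a coordinate direction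
is affine and its derivative is the mean of the slope. In the direction `β_k` the slope has mean
`(eʲ − μ₀ʲ)ᵀ(Γ e_k − E[z z_k]) = −(eʲ − μ₀ʲ)ᵀ E[x x_k]` (as `E[zzᵀ] = E[xxᵀ] + Γ`), which vanishes
by the normal equation for `μ₀ʲ`. In the direction `μ_k` the residual at the truth is
`y − zᵀβ₀ = ξ − wᵀβ₀`, so the slope has mean `E[z_k wᵀβ₀] − Γ_kk β₀_k = 0`, `Γ` being diagonal.
-/

lemma update_add_apply {ι M : Type*} [DecidableEq ι] [AddZeroClass M] (f : ι → M) (k l : ι)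
    (t : M) : Function.update f k (f k + t) l = f l + if l = k then t else 0 := by
  rcases eq_or_ne l k with rfl | h <;> simp [*]

lemma sum_indicator_sub_mul {p : ℕ} {j : Fin p} {v : Fin p → ℝ} (hv : v j = 0)
    (c : Fin p → ℝ) :
    ∑ m, ((if m = j then 1 else 0) - v m) * c m = c j - ∑ m ∈ univ.erase j, v m * c m := by
  rw [sum_erase univ (f := fun m => v m * c m) (by rw [hv, zero_mul])]
  simp only [sub_mul, sum_sub_distrib, ite_mul, one_mul, zero_mul, sum_ite_eq', mem_univ, if_true]

lemma hasDerivAt_integral_of_affine_of_integral_eq_zero {Ω : Type} [MeasurableSpace Ω]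
    {μ : Measure Ω} {F : ℝ → Ω → ℝ} {c g : Ω → ℝ}
    (hF : ∀ t ω, F t ω = c ω + t * g ω) (hg : Integrable g μ) (hg0 : ∫ ω, g ω ∂μ = 0) :
    HasDerivAt (fun t => ∫ ω, F t ω ∂μ) 0 0 := by
  have hconst (t : ℝ) : ∫ ω, F t ω ∂μ = ∫ ω, c ω ∂μ := by
    simp_rw [hF t]
    by_cases hc : Integrable c μ
    · rw [integral_add hc (hg.const_mul t), integral_const_mul, hg0, mul_zero, add_zero]
    · rw [integral_undef hc, integral_undef ((integrable_add_iff_integrable_left'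
        (hg.const_mul t)).not.mpr hc)]
  simpa only [hconst] using hasDerivAt_const (0 : ℝ) (∫ ω, c ω ∂μ)

section Score

variable {p : ℕ} (Γ : Fin p → ℝ) (j : Fin p) (y : ℝ) (z : Fin p → ℝ) (θ : ℝ) (β μv : Fin p → ℝ)

lemma score_update_β {k : Fin p} (hk : k ≠ j) (t : ℝ) :
    score Γ j y z θ (Function.update β k (β k + t)) μv = score Γ j y z θ β μv
      + t * ∑ m, ((if m = j then 1 else 0) - μv m)
        * (Γ m * (if m = k then 1 else 0) - z m * z k) := by
  have hres : ∑ l ∈ univ.erase j, z l * Function.update β k (β k + t) l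
      = ∑ l ∈ univ.erase j, z l * β l + t * z k := by
    simp only [update_add_apply, mul_add, sum_add_distrib, mul_ite, mul_zero,
      sum_ite_eq', mem_erase, ne_eq, hk, not_false_eq_true, mem_univ, and_self, if_true, mul_comm]
  simp only [score, hres, mul_sum, ← sum_add_distrib]
  refine sum_congr rfl fun m _ => ?_
  rcases eq_or_ne m j with rfl | hmj
  · simp [hk.symm]; ring
  rcases eq_or_ne m k with rfl | hmk
  · simp [hmj]; ring
  · simp [hmj, hmk]; ring

lemma score_update_μ (k : Fin p) (t : ℝ) :
    score Γ j y z θ β (Function.update μv k (μv k + t)) = score Γ j y z θ β μv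
      - t * (z k * (y - z j * θ - ∑ l ∈ univ.erase j, z l * β l)
        + Γ k * (if k = j then θ else β k)) := by
  simp only [score, update_add_apply, sub_add_eq_sub_sub, sub_mul _ (ite _ _ _), sum_sub_distrib,
    ite_mul, zero_mul, sum_ite_eq', mem_univ, if_true]

end Score

section Model

variable {Ω : Type} {p : ℕ} (x w : Ω → Fin p → ℝ) (ξ : Ω → ℝ) (β : Fin p → ℝ)

lemma yval_sub_zval_mul_sum (j : Fin p) (ω : Ω) :
    yval x ξ β ω - zval x w ω j * β j - ∑ l ∈ univ.erase j, zval x w ω l * β l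
      = ξ ω - ∑ l, w ω l * β l := by
  rw [sub_sub, add_comm, sum_erase_add _ _ (mem_univ j)]
  simp only [yval, zval, add_mul, sum_add_distrib]
  ring

lemma zval_mul_sub_sum (k : Fin p) (ω : Ω) :
    zval x w ω k * (ξ ω - ∑ l, w ω l * β l)
      = (x ω k * ξ ω + w ω k * ξ ω) - ∑ l, β l * (x ω k * w ω l + w ω k * w ω l) := by
  simp only [zval, mul_sub, mul_sum, add_mul]
  exact congrArg₂ _ rfl (sum_congr rfl fun l _ => by ring)

end Model

section Moments

variable {Ω : Type} [MeasurableSpace Ω] {μ : Measure Ω} {p : ℕ} {x w : Ω → Fin p → ℝ}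

lemma integral_mul_eq_ite_Γv (hdiag : ∀ k l, k ≠ l → ∫ ω, w ω k * w ω l ∂μ = 0)
    (k l : Fin p) : ∫ ω, w ω k * w ω l ∂μ = if k = l then Γv μ w k else 0 := by
  rcases eq_or_ne k l with rfl | h
  · simp [Γv, sq]
  · simp [h, hdiag k l h]

variable (hixw : ∀ k l, Integrable (fun ω => x ω k * w ω l) μ)
  (hiw : ∀ k l, Integrable (fun ω => w ω k * w ω l) μ)
include hixw hiw

lemma integrable_zval_mul_zval (hix : ∀ k l, Integrable (fun ω => x ω k * x ω l) μ)
    (k l : Fin p) : Integrable (fun ω => zval x w ω k * zval x w ω l) μ := by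
  have hwx : Integrable (fun ω => w ω k * x ω l) μ := by simpa only [mul_comm] using hixw l k
  simp only [zval, add_mul, mul_add]
  exact ((hix k l).fun_add hwx).fun_add ((hixw k l).fun_add (hiw k l))

lemma integral_zval_mul_zval (hix : ∀ k l, Integrable (fun ω => x ω k * x ω l) μ)
    (hxw : ∀ k l, ∫ ω, x ω k * w ω l ∂μ = 0)
    (hdiag : ∀ k l, k ≠ l → ∫ ω, w ω k * w ω l ∂μ = 0) (k l : Fin p) :
    ∫ ω, zval x w ω k * zval x w ω l ∂μ
      = (∫ ω, x ω k * x ω l ∂μ) + if k = l then Γv μ w k else 0 := by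
  have hwx : Integrable (fun ω => w ω k * x ω l) μ := by simpa only [mul_comm] using hixw l k
  have hwx0 : ∫ ω, w ω k * x ω l ∂μ = 0 := by simpa only [mul_comm] using hxw l k
  simp only [zval, add_mul, mul_add]
  rw [integral_add ((hix k l).fun_add hwx) ((hixw k l).fun_add (hiw k l)),
    integral_add (hix k l) hwx, integral_add (hixw k l) (hiw k l), hxw, hwx0,
    integral_mul_eq_ite_Γv hdiag]
  ring

variable {ξ : Ω → ℝ} (hixξ : ∀ k, Integrable (fun ω => x ω k * ξ ω) μ)
  (hiwξ : ∀ k, Integrable (fun ω => w ω k * ξ ω) μ) (β : Fin p → ℝ) (k : Fin p)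
include hixξ hiwξ

lemma integrable_zval_mul_sub_sum :
    Integrable (fun ω => zval x w ω k * (ξ ω - ∑ l, w ω l * β l)) μ := by
  simp_rw [zval_mul_sub_sum]
  exact ((hixξ k).fun_add (hiwξ k)).sub
    (integrable_finsetSum _ fun l _ => ((hixw k l).fun_add (hiw k l)).const_mul _)

lemma integral_zval_mul_sub_sum (hxξ : ∀ k, ∫ ω, x ω k * ξ ω ∂μ = 0)
    (hwξ : ∀ k, ∫ ω, w ω k * ξ ω ∂μ = 0) (hxw : ∀ k l, ∫ ω, x ω k * w ω l ∂μ = 0)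
    (hdiag : ∀ k l, k ≠ l → ∫ ω, w ω k * w ω l ∂μ = 0) :
    ∫ ω, zval x w ω k * (ξ ω - ∑ l, w ω l * β l) ∂μ = -(Γv μ w k * β k) := by
  have hterm (l : Fin p) : Integrable (fun ω => β l * (x ω k * w ω l + w ω k * w ω l)) μ :=
    ((hixw k l).fun_add (hiw k l)).const_mul _
  simp_rw [zval_mul_sub_sum]
  rw [integral_sub ((hixξ k).fun_add (hiwξ k)) (integrable_finsetSum _ fun l _ => hterm l),
    integral_add (hixξ k) (hiwξ k), integral_finsetSum _ fun l _ => hterm l, hxξ, hwξ]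
  simp only [integral_const_mul, integral_add (hixw k _) (hiw k _), hxw,
    integral_mul_eq_ite_Γv hdiag]
  simp [mul_comm]

end Moments

section Orthogonality

variable {Ω : Type} [MeasurableSpace Ω] {μ : Measure Ω} [IsProbabilityMeasure μ] {p : ℕ}
  {x w : Ω → Fin p → ℝ} {j k : Fin p}

lemma hasDerivAt_integral_score_update_β (hix : ∀ k l, Integrable (fun ω => x ω k * x ω l) μ)
    (hixw : ∀ k l, Integrable (fun ω => x ω k * w ω l) μ)
    (hiw : ∀ k l, Integrable (fun ω => w ω k * w ω l) μ)
    (hxw : ∀ k l, ∫ ω, x ω k * w ω l ∂μ = 0)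
    (hdiag : ∀ k l, k ≠ l → ∫ ω, w ω k * w ω l ∂μ = 0) {v : Fin p → ℝ} (hvj : v j = 0)
    (hJ : (∫ ω, x ω j * x ω k ∂μ) - ∑ l ∈ univ.erase j, v l * ∫ ω, x ω l * x ω k ∂μ = 0)
    (hk : k ≠ j) (Y : Ω → ℝ) (θ : ℝ) (β : Fin p → ℝ) :
    HasDerivAt (fun t => ∫ ω, score (Γv μ w) j (Y ω) (zval x w ω) θ
      (Function.update β k (β k + t)) v ∂μ) 0 0 := by
  have hint (m : Fin p) : Integrable (fun ω => ((if m = j then 1 else 0) - v m) *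
      (Γv μ w m * (if m = k then 1 else 0) - zval x w ω m * zval x w ω k)) μ :=
    ((integrable_const _).sub (integrable_zval_mul_zval hixw hiw hix m k)).const_mul _
  refine hasDerivAt_integral_of_affine_of_integral_eq_zero
    (fun t ω => score_update_β _ _ _ _ _ _ _ hk t) (integrable_finsetSum _ fun m _ => hint m) ?_
  rw [integral_finsetSum _ fun m _ => hint m]
  simp only [integral_const_mul, integral_sub (integrable_const _)
    (integrable_zval_mul_zval hixw hiw hix _ k), integral_const, probReal_univ, one_smul,
    integral_zval_mul_zval hixw hiw hix hxw hdiag]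
  calc _ = -∑ m, ((if m = j then 1 else 0) - v m) * ∫ ω, x ω m * x ω k ∂μ := by
        rw [← sum_neg_distrib]
        exact sum_congr rfl fun m _ => by split_ifs <;> ring
    _ = 0 := by rw [sum_indicator_sub_mul hvj, hJ, neg_zero]

lemma hasDerivAt_integral_score_update_μ (hixw : ∀ k l, Integrable (fun ω => x ω k * w ω l) μ)
    (hiw : ∀ k l, Integrable (fun ω => w ω k * w ω l) μ) {ξ : Ω → ℝ}
    (hixξ : ∀ k, Integrable (fun ω => x ω k * ξ ω) μ)
    (hiwξ : ∀ k, Integrable (fun ω => w ω k * ξ ω) μ)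
    (hxξ : ∀ k, ∫ ω, x ω k * ξ ω ∂μ = 0) (hwξ : ∀ k, ∫ ω, w ω k * ξ ω ∂μ = 0)
    (hxw : ∀ k l, ∫ ω, x ω k * w ω l ∂μ = 0)
    (hdiag : ∀ k l, k ≠ l → ∫ ω, w ω k * w ω l ∂μ = 0) (β v : Fin p → ℝ) :
    HasDerivAt (fun t => ∫ ω, score (Γv μ w) j (yval x ξ β ω) (zval x w ω) (β j) β
      (Function.update v k (v k + t)) ∂μ) 0 0 := by
  have hβk : (if k = j then β j else β k) = β k := by split_ifs with h <;> simp [h]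
  have hint := integrable_zval_mul_sub_sum hixw hiw hixξ hiwξ β k
  refine hasDerivAt_integral_of_affine_of_integral_eq_zero
    (c := fun ω => score (Γv μ w) j (yval x ξ β ω) (zval x w ω) (β j) β v)
    (g := fun ω => -(zval x w ω k * (ξ ω - ∑ l, w ω l * β l) + Γv μ w k * β k))
    (fun t ω => ?_) (hint.fun_add (integrable_const _)).neg ?_
  · rw [score_update_μ, yval_sub_zval_mul_sum, hβk]
    ring
  · rw [integral_neg, integral_add hint (integrable_const _), integral_const, probReal_univ,
      one_smul, integral_zval_mul_sub_sum hixw hiw hixξ hiwξ β k hxξ hwξ hxw hdiag,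
      neg_add_cancel, neg_zero]

end Orthogonality

theorem score_orthogonality_general
    {Ω : Type} [MeasurableSpace Ω] (μ : Measure Ω) [IsProbabilityMeasure μ]
    {p : ℕ} (x w : Ω → Fin p → ℝ) (ξ : Ω → ℝ) (β₀ : Fin p → ℝ)
    (j : Fin p) (μ₀ : Fin p → ℝ)
    -- integrability of all second moments involved
    (hix : ∀ k l, Integrable (fun ω => x ω k * x ω l) μ)
    (hixw : ∀ k l, Integrable (fun ω => x ω k * w ω l) μ)
    (hiw : ∀ k l, Integrable (fun ω => w ω k * w ω l) μ)
    (hixξ : ∀ k, Integrable (fun ω => x ω k * ξ ω) μ)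
    (hiwξ : ∀ k, Integrable (fun ω => w ω k * ξ ω) μ)
    -- model: zero means and orthogonality of the errors
    (hxξ : ∀ k, ∫ ω, x ω k * ξ ω ∂μ = 0)
    (hwξ : ∀ k, ∫ ω, w ω k * ξ ω ∂μ = 0)
    (hxw : ∀ k l, ∫ ω, x ω k * w ω l ∂μ = 0)
    -- Γ = cov(w) diagonal
    (hdiag : ∀ k l, k ≠ l → ∫ ω, w ω k * w ω l ∂μ = 0)
    -- μ₀ʲ has j-th coordinate zero and solves J_{j,-j} − (μ₀ʲ)ᵀJ_{-j,-j} = 0,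
    -- where J = E[xxᵀ]
    (hμj : μ₀ j = 0)
    (hJ : ∀ k, k ≠ j →
      (∫ ω, x ω j * x ω k ∂μ)
        - ∑ l ∈ Finset.univ.erase j, μ₀ l * ∫ ω, x ω l * x ω k ∂μ = 0) :
    ∀ k, k ≠ j →
      -- derivative in the direction of the k-th coordinate of β_{-j} vanishes
      HasDerivAt (fun t : ℝ =>
          ∫ ω, score (Γv μ w) j (yval x ξ β₀ ω) (zval x w ω) (β₀ j)
            (Function.update β₀ k (β₀ k + t)) μ₀ ∂μ) 0 0
      -- derivative in the direction of the k-th coordinate of μʲ vanishes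
      ∧ HasDerivAt (fun t : ℝ =>
          ∫ ω, score (Γv μ w) j (yval x ξ β₀ ω) (zval x w ω) (β₀ j)
            β₀ (Function.update μ₀ k (μ₀ k + t)) ∂μ) 0 0 := by
  intro k hk
  exact ⟨hasDerivAt_integral_score_update_β hix hixw hiw hxw hdiag hμj (hJ k hk) hk _ _ _,
    hasDerivAt_integral_score_update_μ hixw hiw hixξ hiwξ hxξ hwξ hxw hdiag β₀ μ₀⟩

/-- **Neyman orthogonality of the score.**
For the score `ψ_j(y,z,θ,ηʲ) = (eʲ−μʲ)ᵀ{z(y − z_jθ − z_{-j}ᵀβ_{-j}) + Γ(θeʲ+β_{-j})}`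
with nuisance parameter `ηʲ = (β_{-j}, μʲ)`, if `μ₀ʲ` solves
`J_{j,-j} − (μ₀ʲ)ᵀJ_{-j,-j} = 0` with `J = E[zzᵀ] − Γ = E[xxᵀ]`, then at
`η₀ʲ = (β₀,₋ⱼ, μ₀ʲ)` the map `ηʲ ↦ E[ψ_j(y,z,β₀ⱼ,ηʲ)]` has vanishing derivative in
every nuisance direction: both the gradient in `β_{-j}` and the gradient in `μʲ`
are zero. -/
theorem score_orthogonality
    {Ω : Type} [MeasurableSpace Ω] (μ : Measure Ω) [IsProbabilityMeasure μ]
    {p : ℕ} (x w : Ω → Fin p → ℝ) (ξ : Ω → ℝ) (β₀ : Fin p → ℝ)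
    (j : Fin p) (μ₀ : Fin p → ℝ)
    -- integrability of all second moments involved
    (hix : ∀ k l, Integrable (fun ω => x ω k * x ω l) μ)
    (hixw : ∀ k l, Integrable (fun ω => x ω k * w ω l) μ)
    (hiw : ∀ k l, Integrable (fun ω => w ω k * w ω l) μ)
    (hixξ : ∀ k, Integrable (fun ω => x ω k * ξ ω) μ)
    (hiwξ : ∀ k, Integrable (fun ω => w ω k * ξ ω) μ)
    (hiξ : Integrable ξ μ) (hiξ2 : Integrable (fun ω => ξ ω ^ 2) μ)
    -- model: zero means and orthogonality of the errors
    (hw0 : ∀ k, ∫ ω, w ω k ∂μ = 0)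
    (hxξ : ∀ k, ∫ ω, x ω k * ξ ω ∂μ = 0)
    (hwξ : ∀ k, ∫ ω, w ω k * ξ ω ∂μ = 0)
    (hxw : ∀ k l, ∫ ω, x ω k * w ω l ∂μ = 0)
    -- Γ = cov(w) diagonal
    (hdiag : ∀ k l, k ≠ l → ∫ ω, w ω k * w ω l ∂μ = 0)
    -- μ₀ʲ has j-th coordinate zero and solves J_{j,-j} − (μ₀ʲ)ᵀJ_{-j,-j} = 0,
    -- where J = E[xxᵀ]
    (hμj : μ₀ j = 0)
    (hJ : ∀ k, k ≠ j →
      (∫ ω, x ω j * x ω k ∂μ)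
        - ∑ l ∈ Finset.univ.erase j, μ₀ l * ∫ ω, x ω l * x ω k ∂μ = 0) :
    ∀ k, k ≠ j →
      -- derivative in the direction of the k-th coordinate of β_{-j} vanishes
      HasDerivAt (fun t : ℝ =>
          ∫ ω, score (Γv μ w) j (yval x ξ β₀ ω) (zval x w ω) (β₀ j)
            (Function.update β₀ k (β₀ k + t)) μ₀ ∂μ) 0 0
      -- derivative in the direction of the k-th coordinate of μʲ vanishes
      ∧ HasDerivAt (fun t : ℝ =>
          ∫ ω, score (Γv μ w) j (yval x ξ β₀ ω) (zval x w ω) (β₀ j)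
            β₀ (Function.update μ₀ k (μ₀ k + t)) ∂μ) 0 0 :=
  score_orthogonality_general μ x w ξ β₀ j μ₀ hix hixw hiw hixξ hiwξ hxξ hwξ hxw hdiag hμj hJ
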